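/- arXiv:1806.02109 — 3 statements merged into one kernel-verified Lean document; each statement's English description precedes it below -/
import Mathlib

section
/- For every graph G on vertex set [n] and every vertex v of G that is not a free vertex (i.e., v belongs to at least two maximal cliques), the binomial edge ideal satisfies J_G = J_{G_v} ∩ ((x_v, y_v) + J_{G \ v}), where G_v is the graph obtained from G by adding all edges between pairs of neighbors of v, and G \ v is the induced subgraph on V(G) \ {v}. -/
open MvPolynomial

/-- The binomial edge ideal of a graph `G`, in the polynomial ring whose variables
`x_v = X (Sum.inl v)` and `y_v = X (Sum.inr v)` are indexed by two copies of the
vertex set. -/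
noncomputable def beIdeal (K : Type) [Field K] {V : Type} (G : SimpleGraph V) :
    Ideal (MvPolynomial (V ⊕ V) K) :=
  Ideal.span { f | ∃ u v, G.Adj u v ∧
    f = X (Sum.inl u) * X (Sum.inr v) - X (Sum.inl v) * X (Sum.inr u) }

/-- `s` is a maximal clique of `G`. -/
def IsMaxClique {V : Type} (G : SimpleGraph V) (s : Set V) : Prop :=
  G.IsClique s ∧ ∀ t, G.IsClique t → s ⊆ t → s = t

/-- A vertex is free if it belongs to exactly one maximal clique. -/
def IsFreeVertex {V : Type} (G : SimpleGraph V) (v : V) : Prop :=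
  ∃! s : Set V, IsMaxClique G s ∧ v ∈ s

/-- The number of maximal cliques of `G`. -/
noncomputable def numMaxCliques {V : Type} (G : SimpleGraph V) : ℕ :=
  Set.ncard { s : Set V | IsMaxClique G s }

/-- `G_v`: the graph `G` with all pairs of neighbours of `v` joined by an edge. -/
def addNbhd {V : Type} (G : SimpleGraph V) (v : V) : SimpleGraph V where
  Adj u w := u ≠ w ∧ (G.Adj u w ∨ (G.Adj v u ∧ G.Adj v w))
  symm := by
    constructor
    intro u w h
    exact ⟨h.1.symm, by rcases h.2 with h' | h'
                        · exact Or.inl h'.symm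
                        · exact Or.inr ⟨h'.2, h'.1⟩⟩
  loopless := by constructor; intro u h; exact h.1 rfl

/-- Deletion of the vertex `v` (keeping `v` as an isolated vertex, so that the
ambient polynomial ring is unchanged). -/
def delVert {V : Type} (G : SimpleGraph V) (v : V) : SimpleGraph V where
  Adj u w := G.Adj u w ∧ u ≠ v ∧ w ≠ v
  symm := by constructor; intro u w h; exact ⟨h.1.symm, h.2.2, h.2.1⟩
  loopless := by constructor; intro u h; exact G.loopless.irrefl u h.1

/-!
Write `P = (x_v, y_v)` and let `π` be the substitution `x_v, y_v ↦ 0`, so that `g - π g ∈ P`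
for every `g`. The inclusion `J_G ⊆ J_{G_v} ∩ (P + J_{G \ v})` is immediate on generators.
Conversely, let `g ∈ J_{G_v} ∩ (P + J_{G \ v})`. Since `π` kills `P` and fixes or kills each
generator of `J_{G \ v}`, we get `π g ∈ J_{G \ v} ⊆ J_G`. It remains to see `g - π g ∈ J_G`,
which is checked on `a f_{uw}` for generators `f_{uw}` of `J_{G_v}`. For an edge of `G` this
holds because `π` maps `J_G` into itself. For a new edge, `u, w` are neighbours of `v`, so `π`
fixes `f_{uw}` and `a f_{uw} - π(a f_{uw}) = (a - π a) f_{uw} ∈ P f_{uw}`. Finally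
`P f_{uw} ⊆ J_G` by the identity `x_v f_{uw} = x_u f_{vw} - x_w f_{vu}` and its analogue
for `y_v`.
-/

noncomputable section

section Substitution

variable (R : Type*) [CommRing R] {V : Type*}

def edgeBinomial (u w : V) : MvPolynomial (V ⊕ V) R :=
  X (Sum.inl u) * X (Sum.inr w) - X (Sum.inl w) * X (Sum.inr u)

abbrev varIdeal (v : V) : Ideal (MvPolynomial (V ⊕ V) R) :=
  Ideal.span {X (Sum.inl v), X (Sum.inr v)}

open Classical in
def killVertex (v : V) : MvPolynomial (V ⊕ V) R →ₐ[R] MvPolynomial (V ⊕ V) R :=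
  aeval fun i => if i = Sum.inl v ∨ i = Sum.inr v then 0 else X i

variable {R}

lemma killVertex_X_of_mem {v : V} {i : V ⊕ V} (h : i = Sum.inl v ∨ i = Sum.inr v) :
    killVertex R v (X i) = 0 := by
  simp only [killVertex, aeval_X]
  exact if_pos h

lemma killVertex_X_of_not_mem {v : V} {i : V ⊕ V} (h : ¬(i = Sum.inl v ∨ i = Sum.inr v)) :
    killVertex R v (X i) = X i := by
  simp only [killVertex, aeval_X]
  exact if_neg h

lemma killVertex_X_inl_of_ne {v u : V} (h : u ≠ v) :
    killVertex R v (X (Sum.inl u)) = X (Sum.inl u) :=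
  killVertex_X_of_not_mem (by simpa using h)

lemma killVertex_X_inr_of_ne {v u : V} (h : u ≠ v) :
    killVertex R v (X (Sum.inr u)) = X (Sum.inr u) :=
  killVertex_X_of_not_mem (by simpa using h)

lemma X_inl_mem_varIdeal (v : V) : X (Sum.inl v) ∈ varIdeal R v :=
  Ideal.subset_span (by simp)

lemma X_inr_mem_varIdeal (v : V) : X (Sum.inr v) ∈ varIdeal R v :=
  Ideal.subset_span (by simp)

lemma edgeBinomial_left_mem_varIdeal (v w : V) : edgeBinomial R v w ∈ varIdeal R v :=
  sub_mem (Ideal.mul_mem_right _ _ (X_inl_mem_varIdeal v))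
    (Ideal.mul_mem_left _ _ (X_inr_mem_varIdeal v))

lemma edgeBinomial_right_mem_varIdeal (u v : V) : edgeBinomial R u v ∈ varIdeal R v :=
  sub_mem (Ideal.mul_mem_left _ _ (X_inr_mem_varIdeal v))
    (Ideal.mul_mem_right _ _ (X_inl_mem_varIdeal v))

lemma varIdeal_le_ker_killVertex (v : V) :
    varIdeal R v ≤ RingHom.ker (killVertex R v) := by
  rw [Ideal.span_le]
  rintro f (rfl | rfl)
  · exact killVertex_X_of_mem (Or.inl rfl)
  · exact killVertex_X_of_mem (Or.inr rfl)

lemma sub_killVertex_mem_varIdeal (v : V) (f : MvPolynomial (V ⊕ V) R) :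
    f - killVertex R v f ∈ varIdeal R v := by
  classical
  suffices h : (Ideal.Quotient.mkₐ R (varIdeal R v)).comp (killVertex R v) =
      Ideal.Quotient.mkₐ R (varIdeal R v) from
    Ideal.Quotient.eq.mp (DFunLike.congr_fun h f).symm
  refine algHom_ext fun i => ?_
  by_cases hi : i = Sum.inl v ∨ i = Sum.inr v
  · rw [AlgHom.comp_apply, killVertex_X_of_mem hi, map_zero, eq_comm,
      Ideal.Quotient.mkₐ_eq_mk, Ideal.Quotient.eq_zero_iff_mem]
    rcases hi with rfl | rfl
    exacts [X_inl_mem_varIdeal v, X_inr_mem_varIdeal v]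
  · rw [AlgHom.comp_apply, killVertex_X_of_not_mem hi]

lemma killVertex_edgeBinomial_of_ne {v u w : V} (hu : u ≠ v) (hw : w ≠ v) :
    killVertex R v (edgeBinomial R u w) = edgeBinomial R u w := by
  simp only [edgeBinomial, map_sub, map_mul, killVertex_X_inl_of_ne hu,
    killVertex_X_inr_of_ne hu, killVertex_X_inl_of_ne hw, killVertex_X_inr_of_ne hw]

lemma killVertex_edgeBinomial_left (v w : V) : killVertex R v (edgeBinomial R v w) = 0 :=
  varIdeal_le_ker_killVertex v (edgeBinomial_left_mem_varIdeal v w)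

lemma killVertex_edgeBinomial_right (u v : V) : killVertex R v (edgeBinomial R u v) = 0 :=
  varIdeal_le_ker_killVertex v (edgeBinomial_right_mem_varIdeal u v)

end Substitution

section Graph

variable {K : Type} [Field K] {V : Type} {G H : SimpleGraph V} {v : V}

lemma beIdeal_le_iff {I : Ideal (MvPolynomial (V ⊕ V) K)} :
    beIdeal K G ≤ I ↔ ∀ u w, G.Adj u w → edgeBinomial K u w ∈ I := by
  rw [beIdeal, Ideal.span_le]
  constructor
  · exact fun h u w huw => h ⟨u, w, huw, rfl⟩
  · rintro h f ⟨u, w, huw, rfl⟩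
    exact h u w huw

lemma edgeBinomial_mem_beIdeal {u w : V} (h : G.Adj u w) : edgeBinomial K u w ∈ beIdeal K G :=
  Ideal.subset_span ⟨u, w, h, rfl⟩

lemma beIdeal_mono (h : G ≤ H) : beIdeal K G ≤ beIdeal K H :=
  beIdeal_le_iff.mpr fun _ _ huw => edgeBinomial_mem_beIdeal (h huw)

lemma le_addNbhd : G ≤ addNbhd G v :=
  fun _ _ h => ⟨h.ne, Or.inl h⟩

lemma delVert_le : delVert G v ≤ G :=
  fun _ _ h => h.1

lemma killVertex_mem_beIdeal {g : MvPolynomial (V ⊕ V) K} (hg : g ∈ beIdeal K G) :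
    killVertex K v g ∈ beIdeal K G := by
  suffices h : beIdeal K G ≤ (beIdeal K G).comap (killVertex K v) from h hg
  refine beIdeal_le_iff.mpr fun u w huw => ?_
  rw [Ideal.mem_comap]
  by_cases hu : u = v
  · rw [hu, killVertex_edgeBinomial_left]
    exact zero_mem _
  by_cases hw : w = v
  · rw [hw, killVertex_edgeBinomial_right]
    exact zero_mem _
  rw [killVertex_edgeBinomial_of_ne hu hw]
  exact edgeBinomial_mem_beIdeal huw

lemma mul_edgeBinomial_mem_beIdeal_of_mem_varIdeal {u w : V} (hu : G.Adj v u) (hw : G.Adj v w)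
    {p : MvPolynomial (V ⊕ V) K} (hp : p ∈ varIdeal K v) :
    p * edgeBinomial K u w ∈ beIdeal K G := by
  obtain ⟨a, b, rfl⟩ := Ideal.mem_span_pair.mp hp
  have key : (a * X (Sum.inl v) + b * X (Sum.inr v)) * edgeBinomial K u w =
      (a * X (Sum.inl u) + b * X (Sum.inr u)) * edgeBinomial K v w -
        (a * X (Sum.inl w) + b * X (Sum.inr w)) * edgeBinomial K v u := by
    simp only [edgeBinomial]
    ring
  rw [key]
  exact sub_mem (Ideal.mul_mem_left _ _ (edgeBinomial_mem_beIdeal hw))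
    (Ideal.mul_mem_left _ _ (edgeBinomial_mem_beIdeal hu))

lemma mul_edgeBinomial_sub_killVertex_mem_beIdeal {u w : V} (h : (addNbhd G v).Adj u w)
    (a : MvPolynomial (V ⊕ V) K) :
    a * edgeBinomial K u w - killVertex K v (a * edgeBinomial K u w) ∈ beIdeal K G := by
  rcases h with ⟨-, huw | ⟨hu, hw⟩⟩
  · have hf := Ideal.mul_mem_left _ a (edgeBinomial_mem_beIdeal huw)
    exact sub_mem hf (killVertex_mem_beIdeal hf)
  · rw [map_mul, killVertex_edgeBinomial_of_ne (G.ne_of_adj hu).symm (G.ne_of_adj hw).symm,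
      ← sub_mul]
    exact mul_edgeBinomial_mem_beIdeal_of_mem_varIdeal hu hw (sub_killVertex_mem_varIdeal v a)

lemma sub_killVertex_mem_beIdeal {g : MvPolynomial (V ⊕ V) K}
    (hg : g ∈ beIdeal K (addNbhd G v)) : g - killVertex K v g ∈ beIdeal K G := by
  suffices h : ∀ a, a * g - killVertex K v (a * g) ∈ beIdeal K G by simpa using h 1
  induction hg using Submodule.span_induction with
  | mem f hf =>
    obtain ⟨u, w, huw, rfl⟩ := hf
    exact mul_edgeBinomial_sub_killVertex_mem_beIdeal huw
  | zero => simp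
  | add x y _ _ hx hy =>
    intro a
    convert add_mem (hx a) (hy a) using 1
    rw [mul_add, map_add]
    ring
  | smul b x _ hx =>
    intro a
    rw [smul_eq_mul, ← mul_assoc]
    exact hx (a * b)

lemma killVertex_mem_beIdeal_of_mem_varIdeal_sup {g : MvPolynomial (V ⊕ V) K}
    (hg : g ∈ varIdeal K v ⊔ beIdeal K G) : killVertex K v g ∈ beIdeal K G := by
  obtain ⟨p, hp, j, hj, rfl⟩ := Submodule.mem_sup.mp hg
  rw [map_add, varIdeal_le_ker_killVertex v hp, zero_add]
  exact killVertex_mem_beIdeal hj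

lemma beIdeal_le_varIdeal_sup_delVert :
    beIdeal K G ≤ varIdeal K v ⊔ beIdeal K (delVert G v) := by
  refine beIdeal_le_iff.mpr fun u w huw => ?_
  by_cases hu : u = v
  · exact Ideal.mem_sup_left (hu ▸ edgeBinomial_left_mem_varIdeal u w)
  by_cases hw : w = v
  · exact Ideal.mem_sup_left (hw ▸ edgeBinomial_right_mem_varIdeal u w)
  exact Ideal.mem_sup_right (edgeBinomial_mem_beIdeal ⟨huw, hu, hw⟩)

end Graph

end

theorem beIdeal_eq_inter_of_not_free_general (K : Type) [Field K] {V : Type}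
    (G : SimpleGraph V) (v : V) :
    beIdeal K G =
      beIdeal K (addNbhd G v) ⊓
        (Ideal.span {(X (Sum.inl v) : MvPolynomial (V ⊕ V) K), X (Sum.inr v)} ⊔
          beIdeal K (delVert G v)) := by
  refine le_antisymm (le_inf (beIdeal_mono le_addNbhd) beIdeal_le_varIdeal_sup_delVert) ?_
  rintro g ⟨hg, hg'⟩
  rw [← sub_add_cancel g (killVertex K v g)]
  exact add_mem (sub_killVertex_mem_beIdeal hg)
    (beIdeal_mono delVert_le (killVertex_mem_beIdeal_of_mem_varIdeal_sup hg'))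

/-- Ohtani's lemma: for a non-free vertex `v` of `G`, the binomial edge ideal
decomposes as `J_G = J_{G_v} ∩ ((x_v, y_v) + J_{G \ v})`. -/
theorem beIdeal_eq_inter_of_not_free (K : Type) [Field K] {V : Type} [Fintype V]
    (G : SimpleGraph V) (v : V) (hv : ¬ IsFreeVertex G v) :
    beIdeal K G =
      beIdeal K (addNbhd G v) ⊓
        (Ideal.span {(X (Sum.inl v) : MvPolynomial (V ⊕ V) K), X (Sum.inr v)} ⊔
          beIdeal K (delVert G v)) :=
  beIdeal_eq_inter_of_not_free_general K G v
end

section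
/- For any graph G on [n], the binomial edge ideal admits the primary-type decomposition J_G = ∩_{T ⊆ [n]} P_T(G), where P_T(G) = ({x_i, y_i : i ∈ T}) + J_{\tilde G_1} + ... + J_{\tilde G_{c_G(T)}} and \tilde G_1,...,\tilde G_{c_G(T)} are the complete graphs on the vertex sets of the connected components of G restricted to [n] \ T. -/
open MvPolynomial

/-- Deletion of a set of vertices (keeping them as isolated vertices so that the
ambient polynomial ring is unchanged). -/
def delSet {V : Type} (G : SimpleGraph V) (T : Set V) : SimpleGraph V where
  Adj u w := G.Adj u w ∧ u ∉ T ∧ w ∉ T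
  symm := ⟨by rintro u w ⟨h, h1, h2⟩; exact ⟨h.symm, h2, h1⟩⟩
  loopless := ⟨by rintro u ⟨h, _⟩; exact G.irrefl h⟩

/-- The disjoint union of the complete graphs on the vertex sets of the connected
components of `G` with the vertices of `T` removed. -/
def tildeG {V : Type} (G : SimpleGraph V) (T : Set V) : SimpleGraph V where
  Adj u w := u ≠ w ∧ u ∉ T ∧ w ∉ T ∧ (delSet G T).Reachable u w
  symm := ⟨by rintro u w ⟨h, h1, h2, h3⟩; exact ⟨h.symm, h2, h1, h3.symm⟩⟩
  loopless := ⟨by rintro u ⟨h, _⟩; exact h rfl⟩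

/-- The ideal `P_T(G)`: the variables indexed by `T` together with the binomial
edge ideals of the complete graphs on the connected components of `G` with the
vertices of `T` removed. -/
noncomputable def PTIdeal (K : Type) [Field K] {V : Type} (G : SimpleGraph V) (T : Set V) :
    Ideal (MvPolynomial (V ⊕ V) K) :=
  Ideal.span ((fun i => (X (Sum.inl i) : MvPolynomial (V ⊕ V) K)) '' T ∪
      (fun i => (X (Sum.inr i) : MvPolynomial (V ⊕ V) K)) '' T) ⊔
    beIdeal K (tildeG G T)

/-!
Each binomial `f_uw = x_u y_w - x_w y_u` of an edge lies in `P_T(G)`: in the variable part if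
`u` or `w` is in `T`, and otherwise `u, w` lie in one component of `G - T`.

For the reverse inclusion induct on the number of non-adjacent pairs of non-isolated vertices
plus the number of non-isolated vertices. If `G` is a disjoint union of cliques then
`P_∅(G) = J_G`. Otherwise some vertex `v` has two non-adjacent neighbours. Let `G_v` be `G` with
the neighbourhood of `v` completed to a clique, and `ψ` the substitution `x_v, y_v ↦ 0`.
An `f` lying in every `P_T(G)` lies in every `P_T(G_v)`, and `ψ f` lies in every `P_T(G - v)`
since `ψ` maps `P_{T ∪ {v}}(G)` into `P_T(G - v)`; so by induction `f ∈ J_{G_v}` and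
`ψ f ∈ J_{G - v} ⊆ J_G`. Finally `f - ψ f ∈ J_G`, because `ψ` preserves `J_{G_v}`,
`f - ψ f ∈ (x_v, y_v)` for every `f`, and `(x_v, y_v) · J_{G_v} ⊆ J_G` by the identity
`x_v f_ab = x_a f_vb - x_b f_va`.
-/

namespace BinomialEdgeIdeal

variable {K : Type} [Field K] {V : Type}

section Graphs

lemma delSet_empty (G : SimpleGraph V) : delSet G ∅ = G := by
  ext u w
  simp [delSet]

lemma delSet_le (G : SimpleGraph V) (T : Set V) : delSet G T ≤ G :=
  fun _ _ h => h.1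

lemma delSet_mono {G G' : SimpleGraph V} (h : G ≤ G') (T : Set V) :
    delSet G T ≤ delSet G' T :=
  fun _ _ ⟨hadj, hu, hw⟩ => ⟨h hadj, hu, hw⟩

lemma delSet_insert (G : SimpleGraph V) (v : V) (T : Set V) :
    delSet G (insert v T) = delSet (delSet G {v}) T := by
  ext u w
  simp only [delSet, Set.mem_insert_iff, Set.mem_singleton_iff]
  tauto

lemma tildeG_mono {G G' : SimpleGraph V} (h : G ≤ G') (T : Set V) :
    tildeG G T ≤ tildeG G' T :=
  fun _ _ ⟨hne, hu, hw, hr⟩ => ⟨hne, hu, hw, hr.mono (delSet_mono h T)⟩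

lemma tildeG_insert_le (G : SimpleGraph V) (v : V) (T : Set V) :
    tildeG G (insert v T) ≤ tildeG (delSet G {v}) T := by
  rintro u w ⟨hne, hu, hw, hr⟩
  rw [delSet_insert] at hr
  exact ⟨hne, fun h => hu (Or.inr h), fun h => hw (Or.inr h), hr⟩

lemma tildeG_empty_le {G : SimpleGraph V}
    (hG : ∀ v a b, G.Adj v a → G.Adj v b → a ≠ b → G.Adj a b) : tildeG G ∅ ≤ G := by
  rintro a b ⟨hne, -, -, hr⟩
  rw [delSet_empty] at hr
  obtain ⟨p⟩ := hr
  refine (?_ : a = b ∨ G.Adj a b).resolve_left hne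
  clear hne
  induction p with
  | nil => exact Or.inl rfl
  | @cons a c b hac _ ih =>
    rcases ih with rfl | hcb
    · exact Or.inr hac
    · by_cases hab : a = b
      · exact Or.inl hab
      · exact Or.inr (hG c a b hac.symm hcb hab)

/-- The graph `G_v`. -/
def addNeighborClique (G : SimpleGraph V) (v : V) : SimpleGraph V where
  Adj a b := G.Adj a b ∨ (a ≠ b ∧ G.Adj v a ∧ G.Adj v b)
  symm := ⟨by
    rintro a b (h | ⟨hne, ha, hb⟩)
    exacts [Or.inl h.symm, Or.inr ⟨hne.symm, hb, ha⟩]⟩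
  loopless := ⟨by rintro a (h | ⟨hne, -⟩) <;> simp_all⟩

lemma le_addNeighborClique (G : SimpleGraph V) (v : V) : G ≤ addNeighborClique G v :=
  fun _ _ => Or.inl

lemma addNeighborClique_adj_left {G : SimpleGraph V} {v w : V}
    (h : (addNeighborClique G v).Adj v w) : G.Adj v w :=
  h.resolve_right fun ⟨_, hvv, _⟩ => G.irrefl hvv

lemma support_addNeighborClique (G : SimpleGraph V) (v : V) :
    (addNeighborClique G v).support = G.support := by
  refine (SimpleGraph.support_mono (le_addNeighborClique G v)).antisymm' ?_
  rintro a ⟨b, h | ⟨-, hva, -⟩⟩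
  exacts [⟨b, h⟩, ⟨v, hva.symm⟩]

def supportNonAdj (G : SimpleGraph V) : Set (V × V) :=
  {p | p.1 ∈ G.support ∧ p.2 ∈ G.support ∧ p.1 ≠ p.2 ∧ ¬G.Adj p.1 p.2}

noncomputable def complexity (G : SimpleGraph V) : ℕ :=
  (supportNonAdj G).ncard + G.support.ncard

lemma complexity_addNeighborClique_lt [Finite V] {G : SimpleGraph V} {v a b : V}
    (ha : G.Adj v a) (hb : G.Adj v b) (hab : a ≠ b) (hnab : ¬G.Adj a b) :
    complexity (addNeighborClique G v) < complexity G := by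
  have hsub : supportNonAdj (addNeighborClique G v) ⊆ supportNonAdj G := by
    rintro ⟨x, y⟩ ⟨hx, hy, hne, hn⟩
    rw [support_addNeighborClique] at hx hy
    exact ⟨hx, hy, hne, fun h => hn (Or.inl h)⟩
  have hssub : supportNonAdj (addNeighborClique G v) ⊂ supportNonAdj G :=
    (Set.ssubset_iff_of_subset hsub).2 ⟨(a, b), ⟨⟨v, ha.symm⟩, ⟨v, hb.symm⟩, hab, hnab⟩,
      fun h => h.2.2.2 (Or.inr ⟨hab, ha, hb⟩)⟩
  have := Set.ncard_lt_ncard hssub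
  rw [complexity, complexity, support_addNeighborClique]
  omega

lemma complexity_delSet_lt [Finite V] {G : SimpleGraph V} {v a : V} (ha : G.Adj v a) :
    complexity (delSet G {v}) < complexity G := by
  have hsub : supportNonAdj (delSet G {v}) ⊆ supportNonAdj G := by
    rintro ⟨x, y⟩ ⟨⟨x', hx⟩, ⟨y', hy⟩, hne, hn⟩
    exact ⟨⟨x', hx.1⟩, ⟨y', hy.1⟩, hne, fun h => hn ⟨h, hx.2.1, hy.2.1⟩⟩
  have hsupp : (delSet G {v}).support ⊂ G.support :=
    (Set.ssubset_iff_of_subset (SimpleGraph.support_mono (delSet_le G {v}))).2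
      ⟨v, ⟨a, ha⟩, fun ⟨_, h⟩ => h.2.1 rfl⟩
  have := Set.ncard_le_ncard hsub
  have := Set.ncard_lt_ncard hsupp
  rw [complexity, complexity]
  omega

end Graphs

section Ideals

noncomputable def edgeBinomial (K : Type) [Field K] (u w : V) : MvPolynomial (V ⊕ V) K :=
  X (Sum.inl u) * X (Sum.inr w) - X (Sum.inl w) * X (Sum.inr u)

lemma edgeBinomial_mem_beIdeal {G : SimpleGraph V} {u w : V} (h : G.Adj u w) :
    edgeBinomial K u w ∈ beIdeal K G :=
  Ideal.subset_span ⟨u, w, h, rfl⟩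

lemma beIdeal_le_iff {G : SimpleGraph V} {I : Ideal (MvPolynomial (V ⊕ V) K)} :
    beIdeal K G ≤ I ↔ ∀ u w, G.Adj u w → edgeBinomial K u w ∈ I := by
  rw [beIdeal, Ideal.span_le]
  exact ⟨fun h u w huw => h ⟨u, w, huw, rfl⟩, fun h _ ⟨u, w, huw, hf⟩ => hf ▸ h u w huw⟩

lemma beIdeal_mono {G G' : SimpleGraph V} (h : G ≤ G') : beIdeal K G ≤ beIdeal K G' :=
  beIdeal_le_iff.2 fun _ _ hadj => edgeBinomial_mem_beIdeal (h hadj)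

lemma X_inl_mem_PTIdeal {G : SimpleGraph V} {T : Set V} {i : V} (hi : i ∈ T) :
    X (Sum.inl i) ∈ PTIdeal K G T :=
  Ideal.mem_sup_left (Ideal.subset_span (Or.inl ⟨i, hi, rfl⟩))

lemma X_inr_mem_PTIdeal {G : SimpleGraph V} {T : Set V} {i : V} (hi : i ∈ T) :
    X (Sum.inr i) ∈ PTIdeal K G T :=
  Ideal.mem_sup_left (Ideal.subset_span (Or.inr ⟨i, hi, rfl⟩))

lemma PTIdeal_mono {G G' : SimpleGraph V} (h : G ≤ G') (T : Set V) :
    PTIdeal K G T ≤ PTIdeal K G' T :=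
  sup_le_sup_left (beIdeal_mono (tildeG_mono h T)) _

lemma PTIdeal_empty (G : SimpleGraph V) : PTIdeal K G ∅ = beIdeal K (tildeG G ∅) := by
  simp [PTIdeal]

lemma beIdeal_le_PTIdeal (G : SimpleGraph V) (T : Set V) : beIdeal K G ≤ PTIdeal K G T := by
  refine beIdeal_le_iff.2 fun u w h => ?_
  by_cases hu : u ∈ T
  · exact sub_mem (Ideal.mul_mem_right _ _ (X_inl_mem_PTIdeal hu))
      (Ideal.mul_mem_left _ _ (X_inr_mem_PTIdeal hu))
  by_cases hw : w ∈ T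
  · exact sub_mem (Ideal.mul_mem_left _ _ (X_inr_mem_PTIdeal hw))
      (Ideal.mul_mem_right _ _ (X_inl_mem_PTIdeal hw))
  have hreach : (delSet G T).Reachable u w := SimpleGraph.Adj.reachable ⟨h, hu, hw⟩
  exact Ideal.mem_sup_right (edgeBinomial_mem_beIdeal ⟨G.ne_of_adj h, hu, hw, hreach⟩)

end Ideals

section Substitution

open scoped Classical

/-- The substitution `x_v, y_v ↦ 0`. -/
noncomputable def killVertex (K : Type) [Field K] (v : V) :
    MvPolynomial (V ⊕ V) K →ₐ[K] MvPolynomial (V ⊕ V) K :=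
  aeval fun i => if Sum.elim id id i = v then 0 else X i

noncomputable def vertexIdeal (K : Type) [Field K] (v : V) : Ideal (MvPolynomial (V ⊕ V) K) :=
  Ideal.span {X (Sum.inl v), X (Sum.inr v)}

lemma killVertex_X_inl (v u : V) :
    killVertex K v (X (Sum.inl u)) = if u = v then 0 else X (Sum.inl u) :=
  aeval_X _ _

lemma killVertex_X_inr (v u : V) :
    killVertex K v (X (Sum.inr u)) = if u = v then 0 else X (Sum.inr u) :=
  aeval_X _ _

lemma killVertex_edgeBinomial (v u w : V) :
    killVertex K v (edgeBinomial K u w) = if u = v ∨ w = v then 0 else edgeBinomial K u w := by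
  by_cases hu : u = v <;> by_cases hw : w = v <;>
    simp [edgeBinomial, killVertex_X_inl, killVertex_X_inr, hu, hw]

lemma sub_killVertex_mem_vertexIdeal (v : V) (f : MvPolynomial (V ⊕ V) K) :
    f - killVertex K v f ∈ vertexIdeal K v := by
  have h : (Ideal.Quotient.mkₐ K (vertexIdeal K v)).comp (killVertex K v) =
      Ideal.Quotient.mkₐ K (vertexIdeal K v) := by
    refine MvPolynomial.algHom_ext fun i => ?_
    rw [AlgHom.comp_apply, Ideal.Quotient.mkₐ_eq_mk, Ideal.Quotient.eq]
    rcases i with u | u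
    all_goals
      simp only [killVertex_X_inl, killVertex_X_inr]
      split_ifs with hu
      · rw [zero_sub, hu]
        exact neg_mem (Ideal.subset_span (by simp))
      · rw [sub_self]
        exact zero_mem _
  rw [← Ideal.Quotient.eq, ← Ideal.Quotient.mkₐ_eq_mk K, ← AlgHom.comp_apply, h]

lemma beIdeal_le_comap_killVertex (v : V) (H : SimpleGraph V) :
    beIdeal K H ≤ (beIdeal K H).comap (killVertex K v) := by
  refine beIdeal_le_iff.2 fun u w h => ?_
  rw [Ideal.mem_comap, killVertex_edgeBinomial]
  split_ifs
  exacts [zero_mem _, edgeBinomial_mem_beIdeal h]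

lemma vertexIdeal_mul_beIdeal_addNeighborClique_le (G : SimpleGraph V) (v : V) :
    vertexIdeal K v * beIdeal K (addNeighborClique G v) ≤ beIdeal K G := by
  rw [vertexIdeal, beIdeal, Ideal.span_mul_span', Ideal.span_le]
  rintro _ ⟨c, hc, _, ⟨u, w, huw | ⟨-, hvu, hvw⟩, rfl⟩, rfl⟩
  · exact Ideal.mul_mem_left _ _ (edgeBinomial_mem_beIdeal huw)
  have hu := edgeBinomial_mem_beIdeal (K := K) hvu
  have hw := edgeBinomial_mem_beIdeal (K := K) hvw
  change c * edgeBinomial K u w ∈ beIdeal K G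
  rcases hc with rfl | rfl
  · rw [show X (Sum.inl v) * edgeBinomial K u w =
        X (Sum.inl u) * edgeBinomial K v w - X (Sum.inl w) * edgeBinomial K v u by
      simp only [edgeBinomial]; ring]
    exact sub_mem (Ideal.mul_mem_left _ _ hw) (Ideal.mul_mem_left _ _ hu)
  · rw [show X (Sum.inr v) * edgeBinomial K u w =
        X (Sum.inr u) * edgeBinomial K v w - X (Sum.inr w) * edgeBinomial K v u by
      simp only [edgeBinomial]; ring]
    exact sub_mem (Ideal.mul_mem_left _ _ hw) (Ideal.mul_mem_left _ _ hu)

lemma sub_killVertex_mem_beIdeal {G : SimpleGraph V} {v : V} {f : MvPolynomial (V ⊕ V) K}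
    (hf : f ∈ beIdeal K (addNeighborClique G v)) : f - killVertex K v f ∈ beIdeal K G := by
  induction hf using Submodule.span_induction with
  | mem _ hg =>
    obtain ⟨u, w, huw, rfl⟩ := hg
    change edgeBinomial K u w - killVertex K v (edgeBinomial K u w) ∈ beIdeal K G
    rw [killVertex_edgeBinomial]
    split_ifs with h
    · rw [sub_zero]
      rcases h with rfl | rfl
      exacts [edgeBinomial_mem_beIdeal (addNeighborClique_adj_left huw),
        edgeBinomial_mem_beIdeal (addNeighborClique_adj_left huw.symm).symm]
    · rw [sub_self]
      exact zero_mem _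
  | zero => simp
  | add x y _ _ hx hy =>
    rw [map_add, add_sub_add_comm]
    exact add_mem hx hy
  | smul a x hx ih =>
    -- `f ↦ f - ψ f` is a `ψ`-twisted derivation
    rw [smul_eq_mul, map_mul, show a * x - killVertex K v a * killVertex K v x =
      a * (x - killVertex K v x) + (a - killVertex K v a) * killVertex K v x by ring]
    exact add_mem (Ideal.mul_mem_left _ _ ih)
      (vertexIdeal_mul_beIdeal_addNeighborClique_le G v
        (Ideal.mul_mem_mul (sub_killVertex_mem_vertexIdeal v a)
          (beIdeal_le_comap_killVertex v _ hx)))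

lemma mem_beIdeal_of_killVertex_mem {G : SimpleGraph V} {v : V} {f : MvPolynomial (V ⊕ V) K}
    (hf : f ∈ beIdeal K (addNeighborClique G v))
    (hψ : killVertex K v f ∈ beIdeal K (delSet G {v})) : f ∈ beIdeal K G := by
  simpa using add_mem (sub_killVertex_mem_beIdeal hf) (beIdeal_mono (delSet_le G {v}) hψ)

lemma PTIdeal_insert_le_comap_killVertex (G : SimpleGraph V) (v : V) (T : Set V) :
    PTIdeal K G (insert v T) ≤ (PTIdeal K (delSet G {v}) T).comap (killVertex K v) := by
  refine sup_le (Ideal.span_le.2 ?_) (beIdeal_le_iff.2 fun u w h => ?_)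
  · rintro _ (⟨i, hi, rfl⟩ | ⟨i, hi, rfl⟩) <;>
      simp only [SetLike.mem_coe, Ideal.mem_comap, killVertex_X_inl, killVertex_X_inr] <;>
      split_ifs with hiv
    · exact zero_mem _
    · exact X_inl_mem_PTIdeal (hi.resolve_left hiv)
    · exact zero_mem _
    · exact X_inr_mem_PTIdeal (hi.resolve_left hiv)
  · have hu : u ≠ v := fun huv => h.2.1 (Or.inl huv)
    have hw : w ≠ v := fun hwv => h.2.2.1 (Or.inl hwv)
    rw [Ideal.mem_comap, killVertex_edgeBinomial, if_neg (by tauto)]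
    exact Ideal.mem_sup_right (edgeBinomial_mem_beIdeal (tildeG_insert_le G v T h))

end Substitution

theorem iInf_PTIdeal_le_beIdeal [Finite V] (G : SimpleGraph V) :
    ⨅ T : Set V, PTIdeal K G T ≤ beIdeal K G := by
  induction hn : complexity G using Nat.strong_induction_on generalizing G with
  | _ n ih =>
  by_cases hG : ∀ v a b, G.Adj v a → G.Adj v b → a ≠ b → G.Adj a b
  · calc ⨅ T : Set V, PTIdeal K G T ≤ PTIdeal K G ∅ := iInf_le _ ∅
      _ ≤ beIdeal K G := by rw [PTIdeal_empty]; exact beIdeal_mono (tildeG_empty_le hG)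
  push Not at hG
  obtain ⟨v, a, b, hva, hvb, hab, hnab⟩ := hG
  intro f hf
  rw [Submodule.mem_iInf] at hf
  refine mem_beIdeal_of_killVertex_mem (v := v) ?_ ?_
  · refine ih _ (hn ▸ complexity_addNeighborClique_lt hva hvb hab hnab) _ rfl ?_
    exact Submodule.mem_iInf _ |>.2 fun T => PTIdeal_mono (le_addNeighborClique G v) T (hf T)
  · refine ih _ (hn ▸ complexity_delSet_lt hva) _ rfl ?_
    exact Submodule.mem_iInf _ |>.2 fun T =>
      PTIdeal_insert_le_comap_killVertex G v T (hf (insert v T))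

end BinomialEdgeIdeal

/-- Herzog et al.: the binomial edge ideal is the intersection of the ideals
`P_T(G)` over all subsets `T` of the vertex set. -/
theorem beIdeal_eq_iInf_PTIdeal (K : Type) [Field K] {V : Type} [Fintype V]
    (G : SimpleGraph V) :
    beIdeal K G = ⨅ T : Set V, PTIdeal K G T :=
  le_antisymm (le_iInf fun T => BinomialEdgeIdeal.beIdeal_le_PTIdeal G T)
    (BinomialEdgeIdeal.iInf_PTIdeal_le_beIdeal G)
end

section
/- For m ≥ 3 and v = 2m−1 in F_m, the graph (F_m)_v is a 1-pure fan graph of the complete graph on N_{F_m}[v] on the set W' = {2, 4, ..., 2m}, and F_m \ v is the disjoint union of F_{m−1} and the isolated vertex 2m. -/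
open MvPolynomial

/-- Adjacency relation of the bipartite graph `F_m`, written on 0-indexed labels
`0, …, 2m-1`; in the 1-indexed labelling of the paper the edges are `{2i, 2j-1}`
for `1 ≤ i ≤ j ≤ m`. -/
def AdjF (m : ℕ) (x y : ℕ) : Prop :=
  ∃ i j : ℕ, i ≤ j ∧ j < m ∧ ((x = 2 * i + 1 ∧ y = 2 * j) ∨ (y = 2 * i + 1 ∧ x = 2 * j))

/-- The graph on `Fin N` whose edges are those of `F_m`. -/
def FmOn (N m : ℕ) : SimpleGraph (Fin N) where
  Adj a b := AdjF m a.val b.val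
  symm := by
    constructor
    rintro a b ⟨i, j, h1, h2, h3⟩
    exact ⟨i, j, h1, h2, h3.symm⟩
  loopless := by
    constructor
    rintro a ⟨i, j, h1, h2, h3 | h3⟩ <;> omega

/-- The graph `F_m` on `2m` vertices. -/
def FmGraph (m : ℕ) : SimpleGraph (Fin (2 * m)) := FmOn (2 * m) m

/-- Data describing a `k`-fan of the complete graph `K_n`:  a partitioned subset
`W = W_1 ⊔ ⋯ ⊔ W_k` of the vertices of `K_n`, with `W_i = {v i 0, …, v i (r i - 1)}`
listed in order, and the sizes `a i j` of the attached cliques `K_{a i j}`, where the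
clique of branch `(i,j)` meets `K_n` exactly in `{v i 0, …, v i j}` (so it has
`a i j - (j+1)` new vertices, and `a i j > j + 1` — in the 1-indexed notation of the
paper, `a_{i,j} > j`). -/
structure FanData (n k : ℕ) where
  r : Fin k → ℕ
  rpos : ∀ i, 1 ≤ r i
  v : ∀ i : Fin k, Fin (r i) → Fin n
  vinj : Function.Injective (fun p : Σ i : Fin k, Fin (r i) => v p.1 p.2)
  a : ∀ i : Fin k, Fin (r i) → ℕ
  abig : ∀ i j, j.val + 1 < a i j

/-- The vertex set of the fan graph: the vertices of `K_n` together with the new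
vertices of each branch clique. -/
def FanV {n k : ℕ} (D : FanData n k) : Type :=
  Fin n ⊕ Σ i : Fin k, Σ j : Fin (D.r i), Fin (D.a i j - (j.val + 1))

/-- Membership in the branch clique `K_{a i j}`, which consists of
`v i 0, …, v i j` together with the new vertices of branch `(i,j)`. -/
def inBranch {n k : ℕ} (D : FanData n k) (i : Fin k) (j : Fin (D.r i)) :
    FanV D → Prop
  | Sum.inl x => ∃ j' : Fin (D.r i), j'.val ≤ j.val ∧ x = D.v i j'
  | Sum.inr p => p.1 = i ∧ p.2.1.val = j.val

/-- The `k`-fan graph `F_k^W(K_n)`: the complete graph `K_n` with a fan added on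
each part `W_i` of `W`. -/
def fanGraph {n k : ℕ} (D : FanData n k) : SimpleGraph (FanV D) where
  Adj u w := u ≠ w ∧ ((∃ x y, u = Sum.inl x ∧ w = Sum.inl y) ∨
    ∃ i j, inBranch D i j u ∧ inBranch D i j w)
  symm := by
    constructor
    rintro u w ⟨h1, h2 | ⟨i, j, h3, h4⟩⟩
    · obtain ⟨x, y, hx, hy⟩ := h2
      exact ⟨h1.symm, Or.inl ⟨y, x, hy, hx⟩⟩
    · exact ⟨h1.symm, Or.inr ⟨i, j, h4, h3⟩⟩
  loopless := by constructor; rintro u ⟨h1, _⟩; exact h1 rfl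

/-- `D` describes a `k`-pure fan: each branch clique `K_{a i j}` has `a i j = j + 2`
vertices (in the 1-indexed notation, `a_{i,j} = j + 1`), i.e. exactly one new
vertex. -/
def FanData.IsPure {n k : ℕ} (D : FanData n k) : Prop :=
  ∀ (i : Fin k) (j : Fin (D.r i)), D.a i j = j.val + 2

/-!
In the 0-indexed labels used here, `v = 2m - 2` is adjacent to every odd label, so in `(F_m)_v`
the odd labels together with `v` form a clique `K_{m+1}`. An even label `2j ≠ v` is adjacent
exactly to the odd labels `1, 3, …, 2j + 1`, i.e. to the first `j + 1` vertices of
`W = {1, 3, …, 2m - 3}`: it is the one new vertex of the `j`-th branch of a pure fan on `W`.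
Deleting `v` leaves the edges `{2i + 1, 2j}` with `i ≤ j < m - 1`, which are those of `F_{m-1}`.
-/

section FanGraph

variable {n k : ℕ} {D : FanData n k}

theorem fanGraph_adj_inl_inl {x y : Fin n} :
    (fanGraph D).Adj (Sum.inl x) (Sum.inl y) ↔ x ≠ y :=
  ⟨fun h hxy => h.1 (congrArg Sum.inl hxy),
    fun h => ⟨fun hxy => h (Sum.inl_injective hxy), Or.inl ⟨x, y, rfl, rfl⟩⟩⟩

theorem fanGraph_adj_inl_inr {x : Fin n}
    {p : Σ i : Fin k, Σ j : Fin (D.r i), Fin (D.a i j - (j.val + 1))} :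
    (fanGraph D).Adj (Sum.inl x) (Sum.inr p) ↔
      ∃ j : Fin (D.r p.1), j ≤ p.2.1 ∧ x = D.v p.1 j := by
  constructor
  · rintro ⟨-, ⟨_, _, -, h⟩ | ⟨i, j, ⟨j', hj', rfl⟩, hi, hj⟩⟩
    · cases h
    · subst hi
      exact ⟨j', Fin.le_def.2 (hj.symm ▸ hj'), rfl⟩
  · rintro ⟨j, hj, rfl⟩
    exact ⟨Sum.inl_ne_inr, Or.inr ⟨p.1, p.2.1, ⟨j, hj, rfl⟩, rfl, rfl⟩⟩

theorem FanData.IsPure.not_adj_inr_inr (hD : D.IsPure)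
    (p q : Σ i : Fin k, Σ j : Fin (D.r i), Fin (D.a i j - (j.val + 1))) :
    ¬ (fanGraph D).Adj (Sum.inr p) (Sum.inr q) := by
  rintro ⟨hpq, ⟨_, _, h, -⟩ | ⟨b, c, ⟨hpi, hpj⟩, ⟨hqi, hqj⟩⟩⟩
  · cases h
  obtain ⟨i, j, z⟩ := p
  obtain ⟨i', j', z'⟩ := q
  dsimp only at hpi hpj hqi hqj
  subst hpi hqi
  obtain rfl : j = j' := Fin.ext (hpj.trans hqj.symm)
  have hz := z.isLt
  have hz' := z'.isLt
  have ha := hD _ j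
  obtain rfl : z = z' := Fin.ext (by omega)
  exact hpq rfl

end FanGraph

def pureFanOn (n r : ℕ) (hr : 1 ≤ r) (hrn : r ≤ n) : FanData n 1 where
  r _ := r
  rpos _ := hr
  v _ := Fin.castLE hrn
  vinj := by
    rintro ⟨i, j⟩ ⟨i', j'⟩ h
    obtain rfl := Subsingleton.elim i i'
    obtain rfl := Fin.castLE_injective hrn h
    rfl
  a _ j := j.val + 2
  abig _ j := Nat.lt_succ_self _

namespace pureFanOn

variable {n r : ℕ} {hr : 1 ≤ r} {hrn : r ≤ n}

theorem isPure : (pureFanOn n r hr hrn).IsPure := fun _ _ => rfl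

def tip (j : Fin r) : FanV (pureFanOn n r hr hrn) :=
  Sum.inr ⟨0, j, ⟨0, by show 0 < j.val + 2 - (j.val + 1); omega⟩⟩

theorem inr_eq_tip
    (p : Σ _ : Fin 1, Σ j : Fin r, Fin (j.val + 2 - (j.val + 1))) :
    (Sum.inr p : FanV (pureFanOn n r hr hrn)) = tip p.2.1 := by
  obtain ⟨i, j, z⟩ := p
  obtain rfl := Subsingleton.elim i 0
  obtain rfl : z = ⟨0, by omega⟩ := Fin.ext (by have := z.isLt; omega)
  rfl

theorem adj_inl_tip {x : Fin n} {j : Fin r} :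
    (fanGraph (pureFanOn n r hr hrn)).Adj (Sum.inl x) (tip j) ↔ x.val ≤ j.val := by
  rw [tip, fanGraph_adj_inl_inr]
  constructor
  · rintro ⟨j', hj', rfl⟩
    exact hj'
  · intro hx
    exact ⟨⟨x.val, hx.trans_lt j.isLt⟩, hx, rfl⟩

theorem adj_tip_inl {x : Fin n} {j : Fin r} :
    (fanGraph (pureFanOn n r hr hrn)).Adj (tip j) (Sum.inl x) ↔ x.val ≤ j.val :=
  (SimpleGraph.adj_comm _ _ _).trans adj_inl_tip

theorem not_adj_tip_tip (i j : Fin r) :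
    ¬ (fanGraph (pureFanOn n r hr hrn)).Adj (tip i) (tip j) :=
  isPure.not_adj_inr_inr _ _

end pureFanOn

theorem adjF_iff (m x y : ℕ) : AdjF m x y ↔
    (x % 2 = 1 ∧ y % 2 = 0 ∧ x ≤ y + 1 ∧ y < 2 * m) ∨
      (y % 2 = 1 ∧ x % 2 = 0 ∧ y ≤ x + 1 ∧ x < 2 * m) := by
  constructor
  · rintro ⟨i, j, hij, hjm, h | h⟩ <;> omega
  · rintro (h | h)
    · exact ⟨x / 2, y / 2, by omega, by omega, Or.inl ⟨by omega, by omega⟩⟩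
    · exact ⟨y / 2, x / 2, by omega, by omega, Or.inr ⟨by omega, by omega⟩⟩

section Fm

variable {m : ℕ} {vv : Fin (2 * m)}

theorem FmGraph_adj_iff_odd (hvv : vv.val = 2 * m - 2) (x : Fin (2 * m)) :
    (FmGraph m).Adj vv x ↔ x.val % 2 = 1 := by
  show AdjF m vv.val x.val ↔ _
  have := x.isLt
  rw [adjF_iff]
  omega

theorem addNbhd_FmGraph_adj_iff (hvv : vv.val = 2 * m - 2) (a b : Fin (2 * m)) :
    (addNbhd (FmGraph m) vv).Adj a b ↔ a.val ≠ b.val ∧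
      ((a.val % 2 = 1 ∧ b.val % 2 = 1) ∨
        (a.val % 2 = 1 ∧ b.val % 2 = 0 ∧ a.val ≤ b.val + 1) ∨
        (b.val % 2 = 1 ∧ a.val % 2 = 0 ∧ b.val ≤ a.val + 1)) := by
  show a ≠ b ∧ (AdjF m a.val b.val ∨ (AdjF m vv.val a.val ∧ AdjF m vv.val b.val)) ↔ _
  have := a.isLt
  have := b.isLt
  simp only [adjF_iff, ne_eq, Fin.ext_iff]
  omega

theorem delVert_FmGraph_eq_FmOn (hvv : vv.val = 2 * m - 2) :
    delVert (FmGraph m) vv = FmOn (2 * m) (m - 1) := by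
  ext a b
  show AdjF m a.val b.val ∧ a ≠ vv ∧ b ≠ vv ↔ AdjF (m - 1) a.val b.val
  have := a.isLt
  have := b.isLt
  simp only [adjF_iff, ne_eq, Fin.ext_iff]
  omega

variable (hm : 2 ≤ m)

abbrev fmFan : FanData (m + 1) 1 := pureFanOn (m + 1) (m - 1) (by omega) (by omega)

def fmToFan (x : Fin (2 * m)) : FanV (fmFan hm) :=
  if hx : x.val % 2 = 1 then Sum.inl ⟨x.val / 2, by omega⟩
  else if hv : x.val = 2 * m - 2 then Sum.inl (Fin.last m)
  else pureFanOn.tip ⟨x.val / 2, by omega⟩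

def fanToFm : FanV (fmFan hm) → Fin (2 * m)
  | Sum.inl y => if h : y.val < m then ⟨2 * y.val + 1, by omega⟩ else ⟨2 * m - 2, by omega⟩
  | Sum.inr p => ⟨2 * p.2.1.val, by have : p.2.1.val < m - 1 := p.2.1.isLt; omega⟩

theorem fmToFan_cases (x : Fin (2 * m)) :
    (x.val % 2 = 1 ∧ ∃ y : Fin (m + 1), y.val = x.val / 2 ∧ fmToFan hm x = Sum.inl y) ∨
    (x.val = 2 * m - 2 ∧ fmToFan hm x = Sum.inl (Fin.last m)) ∨
    (x.val % 2 = 0 ∧ x.val ≠ 2 * m - 2 ∧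
      ∃ j : Fin (m - 1), j.val = x.val / 2 ∧ fmToFan hm x = pureFanOn.tip j) := by
  by_cases hodd : x.val % 2 = 1
  · exact Or.inl ⟨hodd, _, rfl, dif_pos hodd⟩
  by_cases hv : x.val = 2 * m - 2
  · exact Or.inr (Or.inl ⟨hv, (dif_neg hodd).trans (dif_pos hv)⟩)
  · exact Or.inr (Or.inr ⟨by omega, hv, _, rfl, (dif_neg hodd).trans (dif_neg hv)⟩)

theorem fanToFm_inl_val (y : Fin (m + 1)) :
    (fanToFm hm (Sum.inl y)).val = if y.val < m then 2 * y.val + 1 else 2 * m - 2 := by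
  simp only [fanToFm]
  split_ifs <;> rfl

theorem fanToFm_tip_val (j : Fin (m - 1)) : (fanToFm hm (pureFanOn.tip j)).val = 2 * j.val :=
  rfl

def fmFanEquiv : Fin (2 * m) ≃ FanV (fmFan hm) where
  toFun := fmToFan hm
  invFun := fanToFm hm
  left_inv x := by
    have := x.isLt
    rcases fmToFan_cases hm x with ⟨hx, y, hy, h⟩ | ⟨hx, h⟩ | ⟨hx, -, j, hj, h⟩ <;>
      rw [h] <;> ext
    · rw [fanToFm_inl_val]
      split_ifs <;> omega
    · rw [fanToFm_inl_val, Fin.val_last, if_neg (lt_irrefl m)]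
      omega
    · rw [fanToFm_tip_val]
      omega
  right_inv u := by
    rcases u with y | p
    · have hval := fanToFm_inl_val hm y
      have := y.isLt
      rcases fmToFan_cases hm (fanToFm hm (Sum.inl y)) with
        ⟨hx, y', hy', h⟩ | ⟨hx, h⟩ | ⟨hx, hv, -⟩ <;> split_ifs at hval <;> try omega
      · obtain rfl : y' = y := Fin.ext (by omega)
        exact h
      · exact h.trans (congrArg Sum.inl (Fin.ext (by rw [Fin.val_last]; omega)))
    · obtain ⟨i, hi⟩ : ∃ i : Fin (m - 1), (Sum.inr p : FanV (fmFan hm)) = pureFanOn.tip i :=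
        ⟨p.2.1, pureFanOn.inr_eq_tip p⟩
      have hval := fanToFm_tip_val hm i
      have := i.isLt
      rw [hi]
      rcases fmToFan_cases hm (fanToFm hm (pureFanOn.tip i)) with
        ⟨hx, -⟩ | ⟨hx, -⟩ | ⟨-, -, j, hj, h⟩
      · omega
      · omega
      · obtain rfl : j = i := Fin.ext (by omega)
        exact h

theorem fmToFan_adj_iff (hvv : vv.val = 2 * m - 2) (a b : Fin (2 * m)) :
    (fanGraph (fmFan hm)).Adj (fmToFan hm a) (fmToFan hm b) ↔
      (addNbhd (FmGraph m) vv).Adj a b := by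
  rw [addNbhd_FmGraph_adj_iff hvv]
  have := a.isLt
  have := b.isLt
  rcases fmToFan_cases hm a with ⟨ha, x, hx, hfa⟩ | ⟨ha, hfa⟩ | ⟨ha, ha', i, hi, hfa⟩ <;>
  rcases fmToFan_cases hm b with ⟨hb, y, hy, hfb⟩ | ⟨hb, hfb⟩ | ⟨hb, hb', j, hj, hfb⟩ <;>
  simp only [hfa, hfb, fanGraph_adj_inl_inl, pureFanOn.adj_inl_tip, pureFanOn.adj_tip_inl,
    pureFanOn.not_adj_tip_tip, ne_eq, Fin.ext_iff, Fin.val_last, not_true_eq_false, false_iff] <;>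
  omega

def fmFanIso (hvv : vv.val = 2 * m - 2) :
    addNbhd (FmGraph m) vv ≃g fanGraph (fmFan hm) where
  toEquiv := fmFanEquiv hm
  map_rel_iff' := fmToFan_adj_iff hm hvv _ _

theorem exists_fmToFan_eq_inl_iff (hvv : vv.val = 2 * m - 2)
    (x : Fin (2 * m)) :
    (∃ y, fmToFan hm x = Sum.inl y) ↔ x ∈ (FmGraph m).neighborSet vv ∨ x = vv := by
  rw [SimpleGraph.mem_neighborSet, FmGraph_adj_iff_odd hvv, Fin.ext_iff, hvv]
  rcases fmToFan_cases hm x with ⟨hx, y, -, h⟩ | ⟨hx, h⟩ | ⟨hx, hv, j, -, h⟩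
  · exact iff_of_true ⟨y, h⟩ (Or.inl hx)
  · exact iff_of_true ⟨_, h⟩ (Or.inr hx)
  · refine iff_of_false ?_ (by omega)
    rintro ⟨y, hy⟩
    exact Sum.inr_ne_inl (h.symm.trans hy)

theorem exists_fmToFan_two_mul_add_one (j : Fin (m - 1)) :
    ∃ hlt : 2 * j.val + 1 < 2 * m,
      fmToFan hm ⟨2 * j.val + 1, hlt⟩ = Sum.inl ((fmFan hm).v 0 j) := by
  have := j.isLt
  refine ⟨by omega, ?_⟩
  rcases fmToFan_cases hm ⟨2 * j.val + 1, by omega⟩ with ⟨-, y, hy, h⟩ | ⟨hx, -⟩ | ⟨hx, -⟩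
  · obtain rfl : y = (fmFan hm).v 0 j := Fin.ext (by
      rw [hy]; show (2 * j.val + 1) / 2 = j.val; omega)
    exact h
  all_goals simp only at hx; omega

end Fm

/-- For `m ≥ 3` and `v = 2m - 1` (1-indexed; label `2m - 2`, 0-indexed) in `F_m`:
`(F_m)_v` is a `1`-pure fan graph of the complete graph on `N_{F_m}[v]` whose fan is
added on the even-labelled vertices `W' = {2, 4, …}` of `F_m`, and `F_m \ v` is
the disjoint union of `F_{m-1}` and isolated vertices. -/
theorem Fm_addNbhd_structure (m : ℕ) (hm : 3 ≤ m) (vv : Fin (2 * m))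
    (hvv : vv.val = 2 * m - 2) :
    (∃ D : FanData (m + 1) 1, D.IsPure ∧ D.r 0 = m - 1 ∧
      ∃ e : addNbhd (FmGraph m) vv ≃g fanGraph D,
        (∀ x : Fin (2 * m), (∃ y, e x = Sum.inl y) ↔
          (x ∈ (FmGraph m).neighborSet vv ∨ x = vv)) ∧
        (∀ j' : Fin (D.r 0), ∃ hlt : 2 * j'.val + 1 < 2 * m,
          e ⟨2 * j'.val + 1, hlt⟩ = Sum.inl (D.v 0 j'))) ∧
    delVert (FmGraph m) vv = FmOn (2 * m) (m - 1) := by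
  have hm2 : 2 ≤ m := by omega
  exact ⟨⟨fmFan hm2, pureFanOn.isPure, rfl, fmFanIso hm2 hvv,
    exists_fmToFan_eq_inl_iff hm2 hvv, exists_fmToFan_two_mul_add_one hm2⟩, delVert_FmGraph_eq_FmOn hvv⟩
end
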